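/- Let ρ ∈ H^2(S), u ∈ H^3(S) periodic solving ρ_t = (ρu)_x + 2γ₂ρ_x. Then d/dt ∫_S ρ_x² dx = 3∫_S u_x ρ_x² dx + 2∫_S u_{xx} ρ ρ_x dx; in particular, if u_x ≤ M₁ pointwise, then d/dt ∫_S ρ_x² dx ≤ (3M₁ + ‖ρ‖_{L^∞}) ∫_S ρ_x² dx + ‖ρ‖_{L^∞} ∫_S u_{xx}² dx. -/

import Mathlib

open MeasureTheory intervalIntegral

/-!
Differentiating `∫ ρ_x²` under the integral sign gives `∫ 2 ρ_x ρ_{xt}`. Differentiating the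
equation in `x` expresses `ρ_{xt}`, and then `2 ρ_x ρ_{xt} - 3 u_x ρ_x² - 2 u_{xx} ρ ρ_x` is the
`x`-derivative of the periodic function `ρ_x² (u + 2γ₂)`, so its integral over a period vanishes.
The estimate follows pointwise from `u_x ≤ M₁` and `2 a b c ≤ |b| (a² + c²)`.
-/

theorem Function.Periodic.deriv_of_hasDerivAt {f f' : ℝ → ℝ} {c : ℝ}
    (hf : Function.Periodic f c) (hd : ∀ x, HasDerivAt f (f' x) x) :
    Function.Periodic f' c := fun x => by
  have h := (hd (x + c)).comp_add_const x c
  rw [show (fun y => f (y + c)) = f from funext hf] at h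
  exact h.unique (hd x)

theorem Function.Periodic.intervalIntegral_deriv_eq_zero {E : Type*} [NormedAddCommGroup E]
    [NormedSpace ℝ E] [CompleteSpace E] {f f' : ℝ → E} {c : ℝ} (hf : Function.Periodic f c)
    (hd : ∀ x, HasDerivAt f (f' x) x) (hint : IntervalIntegrable f' volume 0 c) :
    ∫ x in (0:ℝ)..c, f' x = 0 := by
  have hc : f c = f 0 := by simpa using hf 0
  rw [integral_eq_sub_of_hasDerivAt (fun x _ => hd x) hint, hc, sub_self]

theorem hasDerivAt_intervalIntegral_of_continuous {E : Type*} [NormedAddCommGroup E]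
    [NormedSpace ℝ E] {F F' : ℝ → ℝ → E} (hF : Continuous (Function.uncurry F))
    (hF' : Continuous (Function.uncurry F')) (hd : ∀ s x, HasDerivAt (F · x) (F' s x) s)
    (a b t : ℝ) :
    HasDerivAt (fun s => ∫ x in a..b, F s x) (∫ x in a..b, F' t x) t := by
  have hsec {G : ℝ → ℝ → E} (hG : Continuous (Function.uncurry G)) (s : ℝ) :
      Continuous (G s) := hG.comp (Continuous.prodMk_right s)
  obtain ⟨C, hC⟩ := ((isCompact_closedBall t 1).prod (isCompact_uIcc (a := a) (b := b))
    ).exists_bound_of_continuousOn hF'.continuousOn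
  refine (intervalIntegral.hasDerivAt_integral_of_dominated_loc_of_deriv_le (bound := fun _ => C)
    (Metric.ball_mem_nhds t one_pos)
    (.of_forall fun s => (hsec hF s).aestronglyMeasurable)
    ((hsec hF t).intervalIntegrable a b) (hsec hF' t).aestronglyMeasurable
    (.of_forall fun x hx s hs =>
      hC (s, x) ⟨Metric.ball_subset_closedBall hs, Set.uIoc_subset_uIcc hx⟩)
    intervalIntegrable_const (.of_forall fun x _ s _ => hd s x)).2

theorem two_mul_mul_mul_le_of_abs_le {a b c K : ℝ} (h : |b| ≤ K) :
    2 * (a * b * c) ≤ K * (a ^ 2 + c ^ 2) :=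
  calc 2 * (a * b * c) ≤ |2 * (a * b * c)| := le_abs_self _
    _ = |b| * (2 * |a| * |c|) := by rw [abs_mul, abs_mul, abs_mul, abs_two]; ring
    _ ≤ |b| * (a ^ 2 + c ^ 2) := by
        gcongr; simpa only [sq_abs] using two_mul_le_add_sq |a| |c|
    _ ≤ K * (a ^ 2 + c ^ 2) := by gcongr

section Transport

variable {u ux uxx ρ ρx ρxx ρt ρxt : ℝ → ℝ} {c : ℝ}

theorem hasDerivAt_sq_mul_add_const_of_transport {x : ℝ} (hux : HasDerivAt u (ux x) x)
    (huxx : HasDerivAt ux (uxx x) x) (hρx : HasDerivAt ρ (ρx x) x)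
    (hρxx : HasDerivAt ρx (ρxx x) x) (hρtx : HasDerivAt ρt (ρxt x) x)
    (hpde : ∀ y, ρt y = ρx y * u y + ρ y * ux y + c * ρx y) :
    HasDerivAt (fun y => ρx y ^ 2 * (u y + c))
      (2 * ρx x * ρxt x - 3 * (ux x * ρx x ^ 2) - 2 * (uxx x * ρ x * ρx x)) x := by
  rw [funext hpde] at hρtx
  have hρxt : ρxt x = ρxx x * u x + ρx x * ux x + (ρx x * ux x + ρ x * uxx x) + c * ρxx x :=
    hρtx.unique (((hρxx.mul hux).add (hρx.mul huxx)).add (hρxx.const_mul c))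
  refine ((hρxx.fun_pow 2).mul (hux.add_const c)).congr_deriv ?_
  rw [hρxt]
  ring

theorem integral_two_mul_mul_eq_of_transport {T : ℝ} (hpu : Function.Periodic u T)
    (hpρ : Function.Periodic ρ T) (hux : ∀ x, HasDerivAt u (ux x) x)
    (huxx : ∀ x, HasDerivAt ux (uxx x) x) (hρx : ∀ x, HasDerivAt ρ (ρx x) x)
    (hρxx : ∀ x, HasDerivAt ρx (ρxx x) x) (hρtx : ∀ x, HasDerivAt ρt (ρxt x) x)
    (hpde : ∀ y, ρt y = ρx y * u y + ρ y * ux y + c * ρx y)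
    (hcuxx : Continuous uxx) (hcρxt : Continuous ρxt) :
    ∫ x in (0:ℝ)..T, 2 * ρx x * ρxt x
      = 3 * (∫ x in (0:ℝ)..T, ux x * ρx x ^ 2) + 2 * ∫ x in (0:ℝ)..T, uxx x * ρ x * ρx x := by
  have hcux : Continuous ux := continuous_iff_continuousAt.2 fun x => (huxx x).continuousAt
  have hcρ : Continuous ρ := continuous_iff_continuousAt.2 fun x => (hρx x).continuousAt
  have hcρx : Continuous ρx := continuous_iff_continuousAt.2 fun x => (hρxx x).continuousAt
  have hpρx := hpρ.deriv_of_hasDerivAt hρx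
  have hflux_periodic : Function.Periodic (fun y => ρx y ^ 2 * (u y + c)) T := fun y => by
    simp only [hpρx y, hpu y]
  have hint {f : ℝ → ℝ} (hf : Continuous f) : IntervalIntegrable f volume 0 T :=
    hf.intervalIntegrable 0 T
  have hflux := hflux_periodic.intervalIntegral_deriv_eq_zero
    (fun x => hasDerivAt_sq_mul_add_const_of_transport (hux x) (huxx x) (hρx x) (hρxx x)
      (hρtx x) hpde) (hint (by fun_prop))
  rw [intervalIntegral.integral_sub (hint (by fun_prop)) (hint (by fun_prop)),
    intervalIntegral.integral_sub (hint (by fun_prop)) (hint (by fun_prop)),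
    intervalIntegral.integral_const_mul, intervalIntegral.integral_const_mul] at hflux
  linarith

end Transport

theorem three_mul_integral_add_two_mul_integral_le {ux uxx ρ ρx : ℝ → ℝ} {M K a b : ℝ}
    (hab : a ≤ b) (hcux : Continuous ux) (hcuxx : Continuous uxx) (hcρ : Continuous ρ)
    (hcρx : Continuous ρx) (hM : ∀ x, ux x ≤ M) (hK : ∀ x, |ρ x| ≤ K) :
    3 * (∫ x in a..b, ux x * ρx x ^ 2) + 2 * (∫ x in a..b, uxx x * ρ x * ρx x)
      ≤ (3 * M + K) * (∫ x in a..b, ρx x ^ 2) + K * ∫ x in a..b, uxx x ^ 2 := by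
  have hpointwise : ∀ x, 3 * (ux x * ρx x ^ 2) + 2 * (uxx x * ρ x * ρx x)
      ≤ (3 * M + K) * ρx x ^ 2 + K * uxx x ^ 2 := fun x => by
    linarith [mul_le_mul_of_nonneg_right (hM x) (sq_nonneg (ρx x)),
      two_mul_mul_mul_le_of_abs_le (a := uxx x) (c := ρx x) (hK x)]
  have hint {f : ℝ → ℝ} (hf : Continuous f) : IntervalIntegrable f volume a b :=
    hf.intervalIntegrable a b
  have h := integral_mono_on hab (hint (by fun_prop)) (hint (by fun_prop))
    fun x _ => hpointwise x
  rwa [intervalIntegral.integral_add (hint (by fun_prop)) (hint (by fun_prop)),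
    intervalIntegral.integral_add (hint (by fun_prop)) (hint (by fun_prop)),
    intervalIntegral.integral_const_mul, intervalIntegral.integral_const_mul,
    intervalIntegral.integral_const_mul, intervalIntegral.integral_const_mul] at h

theorem rho_x_energy_identity_general
    (γ₂ M₁ : ℝ) (u ux uxx ρ ρt ρx ρxx ρxt : ℝ → ℝ → ℝ)
    (hcuxx : Continuous (Function.uncurry uxx))
    (hcρx : Continuous (Function.uncurry ρx))
    (hcρxt : Continuous (Function.uncurry ρxt))
    (hpu : ∀ t x : ℝ, u t (x + 1) = u t x)
    (hpρ : ∀ t x : ℝ, ρ t (x + 1) = ρ t x)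
    (hux : ∀ t x : ℝ, HasDerivAt (fun y => u t y) (ux t x) x)
    (huxx : ∀ t x : ℝ, HasDerivAt (fun y => ux t y) (uxx t x) x)
    (hρx : ∀ t x : ℝ, HasDerivAt (fun y => ρ t y) (ρx t x) x)
    (hρxx : ∀ t x : ℝ, HasDerivAt (fun y => ρx t y) (ρxx t x) x)
    -- mixed partial derivative (equality of mixed partials holds by smoothness)
    (hρxt : ∀ t x : ℝ, HasDerivAt (fun s => ρx s x) (ρxt t x) t)
    (hρtx : ∀ t x : ℝ, HasDerivAt (fun y => ρt t y) (ρxt t x) x)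
    (hpde : ∀ t x : ℝ,
      ρt t x = ρx t x * u t x + ρ t x * ux t x + 2 * γ₂ * ρx t x) :
    ∀ t : ℝ,
      HasDerivAt (fun s => ∫ x in (0:ℝ)..1, (ρx s x) ^ 2)
        (3 * (∫ x in (0:ℝ)..1, ux t x * (ρx t x) ^ 2)
          + 2 * ∫ x in (0:ℝ)..1, uxx t x * ρ t x * ρx t x) t ∧
      ((∀ x : ℝ, ux t x ≤ M₁) →
        3 * (∫ x in (0:ℝ)..1, ux t x * (ρx t x) ^ 2)
            + 2 * (∫ x in (0:ℝ)..1, uxx t x * ρ t x * ρx t x)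
          ≤ (3 * M₁ + ⨆ x : ℝ, |ρ t x|) * (∫ x in (0:ℝ)..1, (ρx t x) ^ 2)
            + (⨆ x : ℝ, |ρ t x|) * ∫ x in (0:ℝ)..1, (uxx t x) ^ 2) := by
  intro t
  have hsection {f : ℝ → ℝ → ℝ} (hf : Continuous (Function.uncurry f)) (s : ℝ) :
      Continuous (f s) := hf.comp (Continuous.prodMk_right s)
  have hcρ : Continuous (ρ t) := continuous_iff_continuousAt.2 fun x => (hρx t x).continuousAt
  have hcux : Continuous (ux t) := continuous_iff_continuousAt.2 fun x => (huxx t x).continuousAt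
  refine ⟨?_, fun hM => ?_⟩
  · rw [← integral_two_mul_mul_eq_of_transport (hpu t) (hpρ t) (hux t) (huxx t) (hρx t)
      (hρxx t) (hρtx t) (hpde t) (hsection hcuxx t) (hsection hcρxt t)]
    refine hasDerivAt_intervalIntegral_of_continuous (F := fun s x => ρx s x ^ 2)
      (F' := fun s x => 2 * ρx s x * ρxt s x) (by exact hcρx.pow 2)
      (by exact continuous_const.mul hcρx |>.mul hcρxt) (fun s x => ?_) 0 1 t
    exact ((hρxt s x).fun_pow 2).congr_deriv (by ring)
  · have hbdd : BddAbove (Set.range fun x => |ρ t x|) :=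
      ((Function.Periodic.comp (hpρ t) abs).compact_of_continuous one_ne_zero hcρ.abs).bddAbove
    exact three_mul_integral_add_two_mul_integral_le zero_le_one hcux (hsection hcuxx t) hcρ
      (hsection hcρx t) hM (le_ciSup hbdd)

/-- For a smooth periodic solution of the transport equation `ρ_t = (ρu)_x + 2γ₂ρ_x`:
`d/dt ∫_S ρ_x² dx = 3∫_S u_x ρ_x² dx + 2∫_S u_{xx} ρ ρ_x dx`; in particular, if
`u_x ≤ M₁` pointwise, then
`d/dt ∫_S ρ_x² dx ≤ (3M₁ + ‖ρ‖_∞) ∫_S ρ_x² dx + ‖ρ‖_∞ ∫_S u_{xx}² dx`. -/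
theorem rho_x_energy_identity
    (γ₂ M₁ : ℝ) (u ux uxx ρ ρt ρx ρxx ρxt : ℝ → ℝ → ℝ)
    (hcu : Continuous (Function.uncurry u))
    (hcux : Continuous (Function.uncurry ux))
    (hcuxx : Continuous (Function.uncurry uxx))
    (hcρ : Continuous (Function.uncurry ρ))
    (hcρx : Continuous (Function.uncurry ρx))
    (hcρxx : Continuous (Function.uncurry ρxx))
    (hcρxt : Continuous (Function.uncurry ρxt))
    (hpu : ∀ t x : ℝ, u t (x + 1) = u t x)
    (hpρ : ∀ t x : ℝ, ρ t (x + 1) = ρ t x)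
    (hux : ∀ t x : ℝ, HasDerivAt (fun y => u t y) (ux t x) x)
    (huxx : ∀ t x : ℝ, HasDerivAt (fun y => ux t y) (uxx t x) x)
    (hρt : ∀ t x : ℝ, HasDerivAt (fun s => ρ s x) (ρt t x) t)
    (hρx : ∀ t x : ℝ, HasDerivAt (fun y => ρ t y) (ρx t x) x)
    (hρxx : ∀ t x : ℝ, HasDerivAt (fun y => ρx t y) (ρxx t x) x)
    -- mixed partial derivative (equality of mixed partials holds by smoothness)
    (hρxt : ∀ t x : ℝ, HasDerivAt (fun s => ρx s x) (ρxt t x) t)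
    (hρtx : ∀ t x : ℝ, HasDerivAt (fun y => ρt t y) (ρxt t x) x)
    (hpde : ∀ t x : ℝ,
      ρt t x = ρx t x * u t x + ρ t x * ux t x + 2 * γ₂ * ρx t x) :
    ∀ t : ℝ,
      HasDerivAt (fun s => ∫ x in (0:ℝ)..1, (ρx s x) ^ 2)
        (3 * (∫ x in (0:ℝ)..1, ux t x * (ρx t x) ^ 2)
          + 2 * ∫ x in (0:ℝ)..1, uxx t x * ρ t x * ρx t x) t ∧
      ((∀ x : ℝ, ux t x ≤ M₁) →
        3 * (∫ x in (0:ℝ)..1, ux t x * (ρx t x) ^ 2)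
            + 2 * (∫ x in (0:ℝ)..1, uxx t x * ρ t x * ρx t x)
          ≤ (3 * M₁ + ⨆ x : ℝ, |ρ t x|) * (∫ x in (0:ℝ)..1, (ρx t x) ^ 2)
            + (⨆ x : ℝ, |ρ t x|) * ∫ x in (0:ℝ)..1, (uxx t x) ^ 2) :=
  rho_x_energy_identity_general γ₂ M₁ u ux uxx ρ ρt ρx ρxx ρxt hcuxx hcρx hcρxt hpu hpρ hux huxx hρx
    hρxx hρxt hρtx hpde
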